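/- arXiv:math/0504192 — 4 statements merged into one kernel-verified Lean document; each statement's English description precedes it below -/
import Mathlib

section
/- Let y₀ ∈ I and let ρ > 0 be small enough that the closed disc of radius ρ centered at a(y₀) is contained in D and h is nonvanishing on it. Then (1/(2πi)) ∮_{|x−a(y₀)|=ρ} [ (τ·∂_y²τ − (∂_yτ)²)/τ² + 2·((τ·∂_x²τ − (∂_xτ)²)/τ²)² ] dx = 2·w(y₀) − a''(y₀). In particular, the meromorphic function ∂_y² ln τ + 2(∂_x² ln τ)² has vanishing residue at the simple zero a(y) of τ if and only if the formal Calogero–Moser equation a''(y) = 2·w(y) holds. -/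
open Set Metric

private lemma dslope_differentiableOn {f : ℂ → ℂ} {s : Set ℂ} {b : ℂ}
    (hs : IsOpen s) (hf : DifferentiableOn ℂ f s) (hb : b ∈ s) :
    DifferentiableOn ℂ (dslope f b) s := by
  intro x hx
  rcases eq_or_ne x b with rfl | hne
  · obtain ⟨p, hp⟩ := hf.analyticOnNhd hs x hx
    exact hp.has_fpower_series_dslope_fslope.analyticAt.differentiableAt.differentiableWithinAt
  · exact ((differentiableAt_dslope_of_ne hne).2 <|
      (hf x hx).differentiableAt (hs.mem_nhds hx)).differentiableWithinAt

private lemma circleIntegral_add' {f g : ℂ → ℂ} {c : ℂ} {R : ℝ}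
    (hf : CircleIntegrable f c R) (hg : CircleIntegrable g c R) :
    (∮ z in C(c, R), (f z + g z)) = (∮ z in C(c, R), f z) + ∮ z in C(c, R), g z := by
  simp only [circleIntegral, smul_add, intervalIntegral.integral_add hf.out hg.out]

private lemma circleIntegrable_cmul {f : ℂ → ℂ} {c : ℂ} {R : ℝ} (a : ℂ)
    (hf : CircleIntegrable f c R) : CircleIntegrable (fun z => a * f z) c R :=
  IntervalIntegrable.const_mul hf a

private lemma deriv_x_tau {D : Set ℂ} (hD : IsOpen D) {H : ℂ → ℂ}
    (hH : DifferentiableOn ℂ H D) (b : ℂ) :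
    ∀ x ∈ D, deriv (fun x' => (x' - b) * H x') x = H x + (x - b) * deriv H x := by
  intro x hx
  have h1 : HasDerivAt H (deriv H x) x :=
    ((hH x hx).differentiableAt (hD.mem_nhds hx)).hasDerivAt
  have h2 := ((hasDerivAt_id x).sub_const b).mul h1
  simp only [id_eq] at h2
  exact h2.deriv.trans (by ring)

private lemma deriv2_x_tau {D : Set ℂ} (hD : IsOpen D) {H : ℂ → ℂ}
    (hH : DifferentiableOn ℂ H D) (b : ℂ) :
    ∀ x ∈ D, deriv (fun x' => deriv (fun x'' => (x'' - b) * H x'') x') x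
      = 2 * deriv H x + (x - b) * deriv (deriv H) x := by
  intro x hx
  have hev : (fun x' => deriv (fun x'' => (x'' - b) * H x'') x')
      =ᶠ[nhds x] fun x' => H x' + (x' - b) * deriv H x' := by
    filter_upwards [hD.mem_nhds hx] with z hz
    exact deriv_x_tau hD hH b z hz
  rw [hev.deriv_eq]
  have h1 : HasDerivAt H (deriv H x) x :=
    ((hH x hx).differentiableAt (hD.mem_nhds hx)).hasDerivAt
  have h2 : HasDerivAt (deriv H) (deriv (deriv H) x) x :=
    (((hH.analyticOnNhd hD).deriv x hx).differentiableAt).hasDerivAt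
  have h3 := h1.add (((hasDerivAt_id x).sub_const b).mul h2)
  simp only [id_eq] at h3
  exact h3.deriv.trans (by ring)

private lemma algebra_key (t P PX PXX Q QQ PB PXB PXXB DG A1 A2 : ℂ)
    (ht : t ≠ 0) (hP : P ≠ 0) (hPB : PB ≠ 0) :
    (t * P * (-(A2 * P) - 2 * A1 * Q + t * QQ) - (-(A1 * P) + t * Q) ^ 2) / (t * P) ^ 2
      + 2 * ((t * P * (2 * PX + t * PXX) - (P + t * PX) ^ 2) / (t * P) ^ 2) ^ 2 =
    ((P * QQ - Q ^ 2) / P ^ 2 + 2 * ((P * PXX - PX ^ 2) / P ^ 2) ^ 2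
      - 4 * ((((P * PXX - PX ^ 2) / P ^ 2 - (PB * PXXB - PXB ^ 2) / PB ^ 2) / t - DG) / t))
      + ((-A2 - 4 * DG) * t⁻¹
        + ((-(A1 ^ 2) - 4 * ((PB * PXXB - PXB ^ 2) / PB ^ 2)) * (t ^ 2)⁻¹ + 2 * (t ^ 4)⁻¹)) := by
  have hE : t ^ 4 * P ^ 4 * PB ^ 2 ≠ 0 := by
    exact mul_ne_zero (mul_ne_zero (pow_ne_zero _ ht) (pow_ne_zero _ hP)) (pow_ne_zero _ hPB)
  have e5 : ∀ GA GB : ℂ, 4 * ((((GA / P ^ 2 - GB / PB ^ 2) / t - DG) / t)) =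
      ((4 * GA * PB ^ 2 - 4 * GB * P ^ 2) * t ^ 2 * P ^ 2 - 4 * DG * t ^ 3 * P ^ 4 * PB ^ 2)
        / (t ^ 4 * P ^ 4 * PB ^ 2) := by
    intro GA GB
    rw [div_sub_div _ _ (pow_ne_zero 2 hP) (pow_ne_zero 2 hPB), div_div,
      div_sub' (mul_ne_zero (mul_ne_zero (pow_ne_zero 2 hP) (pow_ne_zero 2 hPB)) ht),
      div_div, ← mul_div_assoc]
    rw [div_eq_div_iff (by exact mul_ne_zero (mul_ne_zero (mul_ne_zero (pow_ne_zero 2 hP)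
      (pow_ne_zero 2 hPB)) ht) ht) hE]
    ring
  have e4 : ∀ X : ℂ, 2 * (X / P ^ 2) ^ 2 =
      (2 * X ^ 2 * t ^ 4 * PB ^ 2) / (t ^ 4 * P ^ 4 * PB ^ 2) := by
    intro X; field_simp
  have e3 : ∀ Y : ℂ, Y / P ^ 2 = (Y * (t ^ 4 * P ^ 2 * PB ^ 2)) / (t ^ 4 * P ^ 4 * PB ^ 2) := by
    intro Y; field_simp
  have e2 : ∀ X : ℂ, 2 * (X / (t * P) ^ 2) ^ 2 =
      (2 * X ^ 2 * PB ^ 2) / (t ^ 4 * P ^ 4 * PB ^ 2) := by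
    intro X; field_simp
  have e1 : ∀ Y : ℂ, Y / (t * P) ^ 2 =
      (Y * (t ^ 2 * P ^ 2 * PB ^ 2)) / (t ^ 4 * P ^ 4 * PB ^ 2) := by
    intro Y; field_simp
  have e6 : ∀ c : ℂ, c * t⁻¹ = (c * (t ^ 3 * P ^ 4 * PB ^ 2)) / (t ^ 4 * P ^ 4 * PB ^ 2) := by
    intro c; field_simp
  have e7 : ∀ A GB : ℂ, (A - 4 * (GB / PB ^ 2)) * (t ^ 2)⁻¹ =
      ((A * PB ^ 2 - 4 * GB) * (t ^ 2 * P ^ 4)) / (t ^ 4 * P ^ 4 * PB ^ 2) := by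
    intro A GB; field_simp
  have e8 : 2 * ((t ^ 4)⁻¹ : ℂ) = (2 * (P ^ 4 * PB ^ 2)) / (t ^ 4 * P ^ 4 * PB ^ 2) := by
    field_simp
  rw [e5, e4, e3, e2, e1, e6, e7, e8]
  simp only [← add_div, ← sub_div]
  rw [div_eq_div_iff hE hE]
  ring

set_option maxHeartbeats 2000000 in
private lemma master {D : Set ℂ} (hD : IsOpen D) (H Hy Hyy : ℂ → ℂ)
    (hH : DifferentiableOn ℂ H D) (hHy : DifferentiableOn ℂ Hy D)
    (hHyy : DifferentiableOn ℂ Hyy D)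
    (b : ℂ) (A1 A2 : ℂ) (ρ : ℝ) (hρ : 0 < ρ) (hball : closedBall b ρ ⊆ D)
    (hne : ∀ x ∈ closedBall b ρ, H x ≠ 0) (F : ℂ → ℂ)
    (hF : ∀ x ∈ sphere b ρ, F x =
      ((x - b) * H x * (-(A2 * H x) - 2 * A1 * Hy x + (x - b) * Hyy x)
          - (-(A1 * H x) + (x - b) * Hy x) ^ 2) / ((x - b) * H x) ^ 2
        + 2 * (((x - b) * H x * (2 * deriv H x + (x - b) * deriv (deriv H) x)
          - (H x + (x - b) * deriv H x) ^ 2) / ((x - b) * H x) ^ 2) ^ 2) :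
    (2 * (Real.pi : ℂ) * Complex.I)⁻¹ * circleIntegral F b ρ =
      -4 * deriv (fun x => (H x * deriv (deriv H) x - deriv H x ^ 2) / H x ^ 2) b - A2 := by
  set g : ℂ → ℂ := fun x => (H x * deriv (deriv H) x - deriv H x ^ 2) / H x ^ 2 with hgdef
  set s : ℂ → ℂ := fun x => (H x * Hyy x - Hy x ^ 2) / H x ^ 2 with hsdef
  set D' : Set ℂ := D ∩ H ⁻¹' {0}ᶜ with hD'def
  have hD'open : IsOpen D' := hH.continuousOn.isOpen_inter_preimage hD isOpen_compl_singleton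
  have hsub : closedBall b ρ ⊆ D' := fun x hx => ⟨hball hx, hne x hx⟩
  have hbD' : b ∈ D' := hsub (mem_closedBall_self hρ.le)
  have hsubD : D' ⊆ D := inter_subset_left
  have hne' : ∀ x ∈ D', H x ≠ 0 := fun x hx => hx.2
  have hHa : AnalyticOnNhd ℂ H D := hH.analyticOnNhd hD
  have hHx : AnalyticOnNhd ℂ (deriv H) D := hHa.deriv
  have hHxx : AnalyticOnNhd ℂ (deriv (deriv H)) D := hHx.deriv
  have hgd : DifferentiableOn ℂ g D' := by
    apply DifferentiableOn.div
    · exact ((hH.mono hsubD).mul (hHxx.differentiableOn.mono hsubD)).sub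
        ((hHx.differentiableOn.mono hsubD).pow 2)
    · exact (hH.mono hsubD).pow 2
    · exact fun x hx => pow_ne_zero 2 (hne' x hx)
  have hsd : DifferentiableOn ℂ s D' := by
    apply DifferentiableOn.div
    · exact ((hH.mono hsubD).mul (hHyy.mono hsubD)).sub ((hHy.mono hsubD).pow 2)
    · exact (hH.mono hsubD).pow 2
    · exact fun x hx => pow_ne_zero 2 (hne' x hx)
  set k : ℂ → ℂ := dslope (dslope g b) b with hkdef
  have hkd : DifferentiableOn ℂ k D' :=
    dslope_differentiableOn hD'open (dslope_differentiableOn hD'open hgd hbD') hbD'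
  set Φ : ℂ → ℂ := fun x => s x + 2 * g x ^ 2 - 4 * k x with hΦdef
  have hΦd : DifferentiableOn ℂ Φ D' :=
    (hsd.add ((hgd.pow 2).const_mul 2)).sub (hkd.const_mul 4)
  -- pointwise identity on the sphere
  have key : EqOn F (fun x => Φ x + ((-A2 - 4 * deriv g b) * (x - b)⁻¹
      + ((-(A1 ^ 2) - 4 * g b) * ((x - b) ^ 2)⁻¹ + 2 * ((x - b) ^ 4)⁻¹))) (sphere b ρ) := by
    intro x hx
    have hxD' : x ∈ D' := hsub (sphere_subset_closedBall hx)
    have hxb : x ≠ b := ne_of_mem_sphere hx hρ.ne'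
    have htne : x - b ≠ 0 := sub_ne_zero.2 hxb
    have hHxne : H x ≠ 0 := hxD'.2
    have hHbne : H b ≠ 0 := hbD'.2
    have hkx : k x = ((g x - g b) / (x - b) - deriv g b) / (x - b) := by
      rw [hkdef, dslope_of_ne _ hxb, slope_def_field, dslope_same,
        dslope_of_ne _ hxb, slope_def_field]
    have hgx : g x = (H x * deriv (deriv H) x - deriv H x ^ 2) / H x ^ 2 := rfl
    have hgb : g b = (H b * deriv (deriv H) b - deriv H b ^ 2) / H b ^ 2 := rfl
    have hsx : s x = (H x * Hyy x - Hy x ^ 2) / H x ^ 2 := rfl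
    have hΦx : Φ x = s x + 2 * g x ^ 2 - 4 * k x := rfl
    rw [hF x hx]
    simp only
    rw [hΦx, hkx, hsx, hgx, hgb]
    set DG := deriv g b with hDG
    set t := x - b with ht
    set P := H x with hP
    set PX := deriv H x with hPX
    set PXX := deriv (deriv H) x with hPXX
    set Q := Hy x with hQ
    set QQ := Hyy x with hQQ
    set PB := H b with hPB
    set PXB := deriv H b with hPXB
    set PXXB := deriv (deriv H) b with hPXXB
    clear_value DG t P PX PXX Q QQ PB PXB PXXB
    exact algebra_key t P PX PXX Q QQ PB PXB PXXB DG A1 A2 htne hHxne hHbne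
  rw [circleIntegral.integral_congr hρ.le key]
  have hbns' : b ∉ sphere b |ρ| := by
    simp only [mem_sphere, dist_self]
    rw [abs_of_pos hρ]
    exact hρ.ne
  have intΦ : CircleIntegrable Φ b ρ :=
    ((hΦd.continuousOn).mono (sphere_subset_closedBall.trans hsub)).circleIntegrable hρ.le
  have i1 : CircleIntegrable (fun z => (z - b)⁻¹) b ρ :=
    circleIntegrable_sub_inv_iff.2 (Or.inr hbns')
  have i2 : CircleIntegrable (fun z => ((z - b) ^ 2)⁻¹) b ρ := by
    have := (circleIntegrable_sub_zpow_iff (c := b) (w := b) (R := ρ) (n := -2)).2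
      (Or.inr (Or.inr hbns'))
    simpa [zpow_neg] using this
  have i4 : CircleIntegrable (fun z => ((z - b) ^ 4)⁻¹) b ρ := by
    have := (circleIntegrable_sub_zpow_iff (c := b) (w := b) (R := ρ) (n := -4)).2
      (Or.inr (Or.inr hbns'))
    simpa [zpow_neg] using this
  have hz2 : (∮ z in C(b, ρ), ((z - b) ^ 2)⁻¹) = 0 := by
    have := circleIntegral.integral_sub_zpow_of_ne (by decide : (-2 : ℤ) ≠ -1) b b ρ
    simpa [zpow_neg] using this
  have hz4 : (∮ z in C(b, ρ), ((z - b) ^ 4)⁻¹) = 0 := by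
    have := circleIntegral.integral_sub_zpow_of_ne (by decide : (-4 : ℤ) ≠ -1) b b ρ
    simpa [zpow_neg] using this
  have hz1 : (∮ z in C(b, ρ), (z - b)⁻¹) = 2 * Real.pi * Complex.I :=
    circleIntegral.integral_sub_inv_of_mem_ball (mem_ball_self hρ)
  have hΦ0 : (∮ z in C(b, ρ), Φ z) = 0 := by
    apply Complex.circleIntegral_eq_zero_of_differentiable_on_off_countable hρ.le
      Set.countable_empty (hΦd.continuousOn.mono hsub)
    intro z hz
    exact (hΦd z (hsub (ball_subset_closedBall hz.1))).differentiableAt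
      (hD'open.mem_nhds (hsub (ball_subset_closedBall hz.1)))
  have j1 : CircleIntegrable (fun z => (-A2 - 4 * deriv g b) * (z - b)⁻¹) b ρ :=
    circleIntegrable_cmul _ i1
  have j2 : CircleIntegrable (fun z => (-(A1 ^ 2) - 4 * g b) * ((z - b) ^ 2)⁻¹) b ρ :=
    circleIntegrable_cmul _ i2
  have j4 : CircleIntegrable (fun z => 2 * ((z - b) ^ 4)⁻¹) b ρ :=
    circleIntegrable_cmul _ i4
  have j24 : CircleIntegrable (fun z => (-(A1 ^ 2) - 4 * g b) * ((z - b) ^ 2)⁻¹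
      + 2 * ((z - b) ^ 4)⁻¹) b ρ := j2.add j4
  have j124 : CircleIntegrable (fun z => (-A2 - 4 * deriv g b) * (z - b)⁻¹
      + ((-(A1 ^ 2) - 4 * g b) * ((z - b) ^ 2)⁻¹ + 2 * ((z - b) ^ 4)⁻¹)) b ρ := j1.add j24
  rw [circleIntegral_add' (f := Φ) intΦ j124,
    circleIntegral_add' (f := fun z => (-A2 - 4 * deriv g b) * (z - b)⁻¹) j1 j24,
    circleIntegral_add' (f := fun z => (-(A1 ^ 2) - 4 * g b) * ((z - b) ^ 2)⁻¹) j2 j4,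
    circleIntegral.integral_const_mul, circleIntegral.integral_const_mul,
    circleIntegral.integral_const_mul, hΦ0, hz1, hz2, hz4]
  have h2pi : (2 * (Real.pi : ℂ) * Complex.I) ≠ 0 := Complex.two_pi_I_ne_zero
  field_simp
  ring

set_option maxHeartbeats 1000000



/-- `τ(x,y) = (x − a(y))·h(x,y)`. -/
noncomputable def tauFn (a : ℝ → ℂ) (h : ℂ → ℝ → ℂ) (x : ℂ) (y : ℝ) : ℂ :=
  (x - a y) * h x y

/-- The meromorphic function `∂_y² ln τ + 2(∂_x² ln τ)²` of `x` (at parameter `y`), written as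
`(τ·∂_y²τ − (∂_yτ)²)/τ² + 2·((τ·∂_x²τ − (∂_xτ)²)/τ²)²`. -/
noncomputable def resExprFn (τ : ℂ → ℝ → ℂ) (x : ℂ) (y : ℝ) : ℂ :=
  (τ x y * deriv (fun y' => deriv (fun y'' => τ x y'') y') y
      - (deriv (fun y' => τ x y') y) ^ 2) / (τ x y) ^ 2
    + 2 * ((τ x y * deriv (fun x' => deriv (fun x'' => τ x'' y) x') x
      - (deriv (fun x' => τ x' y) x) ^ 2) / (τ x y) ^ 2) ^ 2

/-- `q = −2∂ₓ(∂ₓh/h)`. -/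
noncomputable def qFn (h : ℂ → ℝ → ℂ) (x : ℂ) (y : ℝ) : ℂ :=
  -2 * deriv (fun x' => deriv (fun x'' => h x'' y) x' / h x' y) x

/-- Let `τ(x,y) = (x−a(y))·h(x,y)` as in the context, `y₀ ∈ I`, and `ρ > 0` small
enough that the closed disc of radius `ρ` centered at `a(y₀)` lies in `D` and `h(·,y₀)` does not
vanish on it.  Then
`(1/(2πi)) ∮_{|x−a(y₀)|=ρ} [∂_y² ln τ + 2(∂_x² ln τ)²] dx = 2·w(y₀) − a''(y₀)`,
where `w(y) = ∂ₓq(a(y),y)`, `q = −2∂ₓ(∂ₓh/h)`.  In particular the residue of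
`∂_y² ln τ + 2(∂_x² ln τ)²` at the simple zero `a(y₀)` of `τ` vanishes if and only if the formal
Calogero–Moser equation `a''(y₀) = 2·w(y₀)` holds. -/
theorem residue_at_simple_zero_eq_calogero_moser
    (I : Set ℝ) (hIopen : IsOpen I) (hIconn : I.OrdConnected)
    (D : Set ℂ) (hD : IsOpen D)
    (a : ℝ → ℂ) (haD : ∀ y ∈ I, a y ∈ D) (haC2 : ContDiffOn ℝ 2 a I)
    (h : ℂ → ℝ → ℂ)
    (hhol : ∀ y ∈ I, DifferentiableOn ℂ (fun x => h x y) D)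
    (hne : ∀ y ∈ I, h (a y) y ≠ 0)
    (hyC2 : ∀ n : ℕ, ∀ x ∈ D,
      ContDiffOn ℝ 2 (fun y => iteratedDeriv n (fun x' => h x' y) x) I)
    (hmixedhol : ∀ n k : ℕ, k ≤ 2 → ∀ y ∈ I,
      DifferentiableOn ℂ
        (fun x => iteratedDeriv k (fun y' => iteratedDeriv n (fun x' => h x' y') x) y) D)
    (y₀ : ℝ) (hy₀ : y₀ ∈ I)
    (ρ : ℝ) (hρ : 0 < ρ)
    (hball : closedBall (a y₀) ρ ⊆ D)
    (hhne : ∀ x ∈ closedBall (a y₀) ρ, h x y₀ ≠ 0) :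
    (2 * (Real.pi : ℂ) * Complex.I)⁻¹ *
        circleIntegral (fun x => resExprFn (tauFn a h) x y₀) (a y₀) ρ =
      2 * deriv (fun x => qFn h x y₀) (a y₀) - deriv (deriv a) y₀ ∧
    ((2 * (Real.pi : ℂ) * Complex.I)⁻¹ *
        circleIntegral (fun x => resExprFn (tauFn a h) x y₀) (a y₀) ρ = 0 ↔
      deriv (deriv a) y₀ = 2 * deriv (fun x => qFn h x y₀) (a y₀)) := by
  have hbD : a y₀ ∈ D := haD y₀ hy₀
  have hH : DifferentiableOn ℂ (fun x => h x y₀) D := hhol y₀ hy₀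
  have hHy : DifferentiableOn ℂ (fun x => deriv (fun y => h x y) y₀) D := by
    have := hmixedhol 0 1 (by norm_num) y₀ hy₀
    simpa [iteratedDeriv_zero, iteratedDeriv_one] using this
  have hHyy : DifferentiableOn ℂ
      (fun x => deriv (fun y => deriv (fun y' => h x y') y) y₀) D := by
    have := hmixedhol 0 2 le_rfl y₀ hy₀
    have h2 : ∀ f : ℝ → ℂ, iteratedDeriv 2 f = deriv (deriv f) := by
      intro f; rw [show (2:ℕ) = 1+1 from rfl, iteratedDeriv_succ, iteratedDeriv_one]
    simpa [iteratedDeriv_zero, h2] using this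
  have hphi : ∀ x ∈ D, ContDiffOn ℝ 2 (fun y => h x y) I := by
    intro x hx; have := hyC2 0 x hx; simpa [iteratedDeriv_zero] using this
  have haDiff : ∀ y ∈ I, HasDerivAt a (deriv a y) y := fun y hy =>
    ((haC2.differentiableOn (by norm_num) y hy).differentiableAt
      (hIopen.mem_nhds hy)).hasDerivAt
  have hphiD : ∀ x ∈ D, ∀ y ∈ I,
      HasDerivAt (fun y' => h x y') (deriv (fun y' => h x y') y) y := fun x hx y hy =>
    (((hphi x hx).differentiableOn (by norm_num) y hy).differentiableAt
      (hIopen.mem_nhds hy)).hasDerivAt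
  have hty : ∀ x ∈ D, ∀ y ∈ I, deriv (fun y' => tauFn a h x y') y
      = -(deriv a y * h x y) + (x - a y) * deriv (fun y' => h x y') y := by
    intro x hx y hy
    have H1 := ((hasDerivAt_const y x).sub (haDiff y hy)).mul (hphiD x hx y hy)
    simp only [tauFn]
    exact H1.deriv.trans (by simp only [Pi.sub_apply]; ring)
  have hdty : ∀ x ∈ D, deriv (fun y' => deriv (fun y'' => tauFn a h x y'') y') y₀
      = -(deriv (deriv a) y₀ * h x y₀)
        - 2 * deriv a y₀ * deriv (fun y => h x y) y₀
        + (x - a y₀) * deriv (fun y => deriv (fun y' => h x y') y) y₀ := by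
    intro x hx
    have hev : (fun y' => deriv (fun y'' => tauFn a h x y'') y') =ᶠ[nhds y₀]
        (fun y => -(deriv a y * h x y) + (x - a y) * deriv (fun y' => h x y') y) := by
      filter_upwards [hIopen.mem_nhds hy₀] with z hz
      exact hty x hx z hz
    rw [hev.deriv_eq]
    have hda : HasDerivAt (fun y => deriv a y) (deriv (deriv a) y₀) y₀ := by
      have h1 : ContDiffOn ℝ 1 (deriv a) I := haC2.deriv_of_isOpen hIopen (by norm_num)
      exact ((h1.differentiableOn (by norm_num) y₀ hy₀).differentiableAt
        (hIopen.mem_nhds hy₀)).hasDerivAt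
    have hdphi : HasDerivAt (fun y => deriv (fun y' => h x y') y)
        (deriv (fun y => deriv (fun y' => h x y') y) y₀) y₀ := by
      have h1 : ContDiffOn ℝ 1 (deriv (fun y => h x y)) I :=
        (hphi x hx).deriv_of_isOpen hIopen (by norm_num)
      exact ((h1.differentiableOn (by norm_num) y₀ hy₀).differentiableAt
        (hIopen.mem_nhds hy₀)).hasDerivAt
    have H2 := ((hda.mul (hphiD x hx y₀ hy₀)).neg).add
      (((hasDerivAt_const y₀ x).sub (haDiff y₀ hy₀)).mul hdphi)
    exact H2.deriv.trans (by simp only [Pi.sub_apply]; ring)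
  have htx : ∀ x ∈ D, deriv (fun x' => tauFn a h x' y₀) x
      = h x y₀ + (x - a y₀) * deriv (fun x' => h x' y₀) x := by
    intro x hx
    have := deriv_x_tau hD hH (a y₀) x hx
    simpa [tauFn] using this
  have htxx : ∀ x ∈ D, deriv (fun x' => deriv (fun x'' => tauFn a h x'' y₀) x') x
      = 2 * deriv (fun x' => h x' y₀) x
        + (x - a y₀) * deriv (deriv (fun x' => h x' y₀)) x := by
    intro x hx
    have := deriv2_x_tau hD hH (a y₀) x hx
    simp only [tauFn]
    convert this using 3
  have main := master hD (fun x' => h x' y₀) (fun x' => deriv (fun y => h x' y) y₀)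
      (fun x' => deriv (fun y => deriv (fun y' => h x' y') y) y₀) hH hHy hHyy
      (a y₀) (deriv a y₀) (deriv (deriv a) y₀) ρ hρ hball hhne
      (fun x => resExprFn (tauFn a h) x y₀) ?hF
  case hF =>
    intro x hx
    have hxD : x ∈ D := hball (sphere_subset_closedBall hx)
    simp only [resExprFn]
    rw [hty x hxD y₀ hy₀, hdty x hxD, htx x hxD, htxx x hxD]
    simp only [tauFn]
  -- relate deriv of qFn to deriv of g
  set G : ℂ → ℂ := fun x =>
    (h x y₀ * deriv (deriv (fun x' => h x' y₀)) x - deriv (fun x' => h x' y₀) x ^ 2)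
      / (h x y₀) ^ 2 with hGdef
  set U : Set ℂ := D ∩ (fun x => h x y₀) ⁻¹' {0}ᶜ with hUdef
  have hUopen : IsOpen U := hH.continuousOn.isOpen_inter_preimage hD isOpen_compl_singleton
  have hbU : a y₀ ∈ U := ⟨hbD, hne y₀ hy₀⟩
  have hGd : DifferentiableOn ℂ G U := by
    apply DifferentiableOn.div
    · exact ((hH.mono inter_subset_left).mul
        (((hH.analyticOnNhd hD).deriv.deriv).differentiableOn.mono inter_subset_left)).sub
        (((hH.analyticOnNhd hD).deriv.differentiableOn.mono inter_subset_left).pow 2)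
    · exact (hH.mono inter_subset_left).pow 2
    · exact fun x hx => pow_ne_zero 2 hx.2
  have hqg : (fun x => qFn h x y₀) =ᶠ[nhds (a y₀)] (fun x => -2 * G x) := by
    filter_upwards [hUopen.mem_nhds hbU] with z hz
    simp only [qFn, hGdef]
    have hd1 : DifferentiableAt ℂ (fun x' => deriv (fun x'' => h x'' y₀) x') z :=
      ((hH.analyticOnNhd hD).deriv z hz.1).differentiableAt
    have hd2 : DifferentiableAt ℂ (fun x' => h x' y₀) z :=
      (hH z hz.1).differentiableAt (hD.mem_nhds hz.1)
    rw [show (fun x' => deriv (fun x'' => h x'' y₀) x' / h x' y₀) = (fun x' => deriv (fun x'' => h x'' y₀) x') / (fun x' => h x' y₀) from rfl, deriv_div hd1 hd2 hz.2]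
    ring
  have hqd : deriv (fun x => qFn h x y₀) (a y₀) = -2 * deriv G (a y₀) := by
    rw [hqg.deriv_eq]
    exact deriv_const_mul (-2) ((hGd _ hbU).differentiableAt (hUopen.mem_nhds hbU))
  have hmG : deriv (fun x => ((fun x' => h x' y₀) x
        * deriv (deriv (fun x' => h x' y₀)) x - deriv (fun x' => h x' y₀) x ^ 2)
      / (fun x' => h x' y₀) x ^ 2) (a y₀) = deriv G (a y₀) := rfl
  rw [main]
  constructor
  · rw [hqd, hmG]; ring
  · rw [hqd, hmG]
    constructor
    · intro h0
      have : -4 * deriv G (a y₀) = deriv (deriv a) y₀ := by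
        linear_combination h0
      rw [← this]; ring
    · intro h0; rw [h0]; ring
end

section
/- Let I ⊆ ℝ be an open interval and let x, α, β, γ, v, w : I → ℂ be functions with x twice differentiable and α, β differentiable. Suppose α(y) ≠ 0 for all y ∈ I and the three equations α·x' + 2β = 0, α' + α·v + 2γ = 0, and β' + v·β − γ·x' + α·w = 0 hold on I (primes denoting y-derivatives). Then x'' = 2·w on I. -/
/-- the algebraic core of Lemma 2.1. Let `I ⊆ ℝ` be an open interval and
`x, α, β, γ, v, w : I → ℂ` with `x` twice differentiable and `α, β` differentiable,
`α ≠ 0` on `I`.  If `α·x' + 2β = 0`, `α' + α·v + 2γ = 0` and `β' + v·β − γ·x' + α·w = 0`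
on `I`, then `x'' = 2·w` on `I`. -/
theorem calogero_moser_from_laurent_coefficients
    (I : Set ℝ) (hIopen : IsOpen I) (hIconn : I.OrdConnected)
    (x α β γ v w : ℝ → ℂ)
    (hx : ∀ y ∈ I, DifferentiableAt ℝ x y)
    (hx' : ∀ y ∈ I, DifferentiableAt ℝ (deriv x) y)
    (hα : ∀ y ∈ I, DifferentiableAt ℝ α y)
    (hβ : ∀ y ∈ I, DifferentiableAt ℝ β y)
    (hα0 : ∀ y ∈ I, α y ≠ 0)
    (heq1 : ∀ y ∈ I, α y * deriv x y + 2 * β y = 0)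
    (heq2 : ∀ y ∈ I, deriv α y + α y * v y + 2 * γ y = 0)
    (heq3 : ∀ y ∈ I, deriv β y + v y * β y - γ y * deriv x y + α y * w y = 0) :
    ∀ y ∈ I, deriv (deriv x) y = 2 * w y := by
  intro y hy
  have hmem : I ∈ nhds y := hIopen.mem_nhds hy
  have hEq : β =ᶠ[nhds y] fun t => -(α t * deriv x t) / 2 := by
    filter_upwards [hmem] with t ht
    have h := heq1 t ht
    linear_combination h / 2
  have hβ' : deriv β y = -(deriv α y * deriv x y + α y * deriv (deriv x) y) / 2 := by
    rw [hEq.deriv_eq, deriv_div_const, deriv.fun_neg, deriv_fun_mul (hα y hy) (hx' y hy)]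
  have h1 := heq1 y hy
  have h2 := heq2 y hy
  have h3 := heq3 y hy
  rw [hβ'] at h3
  have key : α y * deriv (deriv x) y = α y * (2 * w y) := by
    linear_combination (-2 : ℂ) * h3 - deriv x y * h2 + v y * h1
  exact mul_left_cancel₀ (hα0 y hy) key
end

section
/- Let I ⊆ ℝ be an open interval and let a, r, r₀, r₁, v, w : I → ℂ be functions with a twice differentiable and r, r₀ differentiable. Suppose a'' = 2·w and r' + v·r + 2r₁ = 0 on I. Define R := −(a'·r + 2r₀)/2 and R₁ := (r₀' − a'·r₁ + v·r₀ + w·r)/2. Then R' + v·R + 2R₁ = 0 on I. -/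
/-- the algebraic identity underlying the induction step in Lemma 2.2.
If `a'' = 2·w` and `r' + v·r + 2r₁ = 0` on an open interval `I`, and
`R = −(a'·r + 2r₀)/2`, `R₁ = (r₀' − a'·r₁ + v·r₀ + w·r)/2`, then `R' + v·R + 2R₁ = 0` on `I`. -/
theorem residue_induction_step_algebraic
    (I : Set ℝ) (hIopen : IsOpen I) (hIconn : I.OrdConnected)
    (a r r₀ r₁ v w : ℝ → ℂ)
    (ha : ∀ y ∈ I, DifferentiableAt ℝ a y)
    (ha' : ∀ y ∈ I, DifferentiableAt ℝ (deriv a) y)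
    (hr : ∀ y ∈ I, DifferentiableAt ℝ r y)
    (hr₀ : ∀ y ∈ I, DifferentiableAt ℝ r₀ y)
    (hcm : ∀ y ∈ I, deriv (deriv a) y = 2 * w y)
    (hres : ∀ y ∈ I, deriv r y + v y * r y + 2 * r₁ y = 0)
    (R R₁ : ℝ → ℂ)
    (hR : ∀ y, R y = -(deriv a y * r y + 2 * r₀ y) / 2)
    (hR₁ : ∀ y, R₁ y = (deriv r₀ y - deriv a y * r₁ y + v y * r₀ y + w y * r y) / 2) :
    ∀ y ∈ I, deriv R y + v y * R y + 2 * R₁ y = 0 := by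
  intro y hy
  have hRfun : R = fun y => -(deriv a y * r y + 2 * r₀ y) / 2 := funext hR
  have hderiv : deriv R y =
      -(deriv (deriv a) y * r y + deriv a y * deriv r y + 2 * deriv r₀ y) / 2 := by
    rw [hRfun]
    rw [deriv_div_const]
    rw [deriv.fun_neg]
    rw [deriv_fun_add ((ha' y hy).fun_mul (hr y hy)) ((hr₀ y hy).const_mul 2)]
    rw [deriv_fun_mul (ha' y hy) (hr y hy), deriv_const_mul _ (hr₀ y hy)]
  have h1 : deriv r y = -(v y * r y + 2 * r₁ y) := by
    have := hres y hy; linear_combination this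
  rw [hderiv, hR y, hR₁ y, hcm y hy, h1]
  ring
end

section
/- (Equation (v7)) Let O ⊆ ℂ^g be open, I ⊆ ℝ an open interval, U ∈ ℂ^g, b ∈ ℂ, and l : ℂ^g → ℂ a linear form with l(U) = 1. Let u, ξ⁰, ξ₁, ξ* : O × I → ℂ be functions differentiable in y and admitting the required directional derivatives along U, and let c : O × I → ℂ be twice differentiable in y with ∂_U c = 0 and ∂_U(∂_y c) = 0. Suppose 2∂_Uξ₁ = u + b and 2∂_Uξ* = ∂_yξ⁰ + (u+b)·ξ⁰ − ∂_U²ξ⁰ on O × I. Then the function ξ̃(z,y) = ξ*(z,y) + c(z,y)·ξ₁(z,y) + (l(z)/2)·∂_y c(z,y) satisfies 2∂_Uξ̃ = ∂_y(ξ⁰+c) + (u+b)·(ξ⁰+c) − ∂_U²(ξ⁰+c) on O × I. -/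
open Set

/-- Equation (v7).  On `O × I` with `2∂_Uξ₁ = u + b`,
`2∂_Uξ* = ∂_yξ⁰ + (u+b)·ξ⁰ − ∂_U²ξ⁰`, `∂_Uc = 0` and `∂_U(∂_yc) = 0`, the function
`ξ̃(z,y) = ξ*(z,y) + c(z,y)·ξ₁(z,y) + (l(z)/2)·∂_yc(z,y)` satisfies
`2∂_Uξ̃ = ∂_y(ξ⁰+c) + (u+b)·(ξ⁰+c) − ∂_U²(ξ⁰+c)` on `O × I`. -/
theorem modified_wave_coefficient_solves_recursion
    (g : ℕ) (O : Set (Fin g → ℂ)) (hO : IsOpen O)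
    (I : Set ℝ) (hIopen : IsOpen I) (hIconn : I.OrdConnected)
    (U : Fin g → ℂ) (b : ℂ) (l : (Fin g → ℂ) →ₗ[ℂ] ℂ) (hlU : l U = 1)
    (u ξ₀ ξ₁ ξs c : (Fin g → ℂ) → ℝ → ℂ)
    (hξ₀z : ∀ y ∈ I, DifferentiableOn ℂ (fun z => ξ₀ z y) O)
    (hξ₀zz : ∀ y ∈ I,
      DifferentiableOn ℂ (fun z => fderiv ℂ (fun z' => ξ₀ z' y) z U) O)
    (hξ₁z : ∀ y ∈ I, DifferentiableOn ℂ (fun z => ξ₁ z y) O)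
    (hξsz : ∀ y ∈ I, DifferentiableOn ℂ (fun z => ξs z y) O)
    (hcz : ∀ y ∈ I, DifferentiableOn ℂ (fun z => c z y) O)
    (hcyz : ∀ y ∈ I,
      DifferentiableOn ℂ (fun z => deriv (fun y' => c z y') y) O)
    (hξ₀y : ∀ z ∈ O, ∀ y ∈ I, DifferentiableAt ℝ (fun y' => ξ₀ z y') y)
    (hcy : ∀ z ∈ O, ∀ y ∈ I, DifferentiableAt ℝ (fun y' => c z y') y)
    (hcyy : ∀ z ∈ O, ∀ y ∈ I,
      DifferentiableAt ℝ (fun y' => deriv (fun y'' => c z y'') y') y)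
    (hcU : ∀ z ∈ O, ∀ y ∈ I, fderiv ℂ (fun z' => c z' y) z U = 0)
    (hcyU : ∀ z ∈ O, ∀ y ∈ I,
      fderiv ℂ (fun z' => deriv (fun y' => c z' y') y) z U = 0)
    (hξ₁eq : ∀ z ∈ O, ∀ y ∈ I,
      2 * fderiv ℂ (fun z' => ξ₁ z' y) z U = u z y + b)
    (hξseq : ∀ z ∈ O, ∀ y ∈ I,
      2 * fderiv ℂ (fun z' => ξs z' y) z U =
        deriv (fun y' => ξ₀ z y') y + (u z y + b) * ξ₀ z y
          - fderiv ℂ (fun z' => fderiv ℂ (fun z'' => ξ₀ z'' y) z' U) z U) :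
    ∀ z ∈ O, ∀ y ∈ I,
      2 * fderiv ℂ
          (fun z' => ξs z' y + c z' y * ξ₁ z' y + l z' / 2 * deriv (fun y' => c z' y') y)
          z U =
        deriv (fun y' => ξ₀ z y' + c z y') y + (u z y + b) * (ξ₀ z y + c z y)
          - fderiv ℂ (fun z' => fderiv ℂ (fun z'' => ξ₀ z'' y + c z'' y) z' U) z U := by

  intro z hz y hy
  set L := LinearMap.toContinuousLinearMap l with hL
  have hzO : O ∈ nhds z := hO.mem_nhds hz
  have hdξs : DifferentiableAt ℂ (fun z' => ξs z' y) z :=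
    (hξsz y hy).differentiableAt hzO
  have hdc : DifferentiableAt ℂ (fun z' => c z' y) z :=
    (hcz y hy).differentiableAt hzO
  have hdξ₁ : DifferentiableAt ℂ (fun z' => ξ₁ z' y) z :=
    (hξ₁z y hy).differentiableAt hzO
  have hdcy : DifferentiableAt ℂ (fun z' => deriv (fun y' => c z' y') y) z :=
    (hcyz y hy).differentiableAt hzO
  -- second-order term
  have hev : (fun z' => fderiv ℂ (fun z'' => ξ₀ z'' y + c z'' y) z' U)
      =ᶠ[nhds z] (fun z' => fderiv ℂ (fun z'' => ξ₀ z'' y) z' U) := by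
    filter_upwards [hzO] with z' hz'
    have h1 : DifferentiableAt ℂ (fun z'' => ξ₀ z'' y) z' :=
      (hξ₀z y hy).differentiableAt (hO.mem_nhds hz')
    have h2 : DifferentiableAt ℂ (fun z'' => c z'' y) z' :=
      (hcz y hy).differentiableAt (hO.mem_nhds hz')
    rw [fderiv_fun_add h1 h2, ContinuousLinearMap.add_apply, hcU z' hz' y hy, add_zero]
  have hsecond : fderiv ℂ (fun z' => fderiv ℂ (fun z'' => ξ₀ z'' y + c z'' y) z' U) z U
      = fderiv ℂ (fun z' => fderiv ℂ (fun z'' => ξ₀ z'' y) z' U) z U := by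
    rw [hev.fderiv_eq]
  -- time derivative term
  have hderiv : deriv (fun y' => ξ₀ z y' + c z y') y
      = deriv (fun y' => ξ₀ z y') y + deriv (fun y' => c z y') y :=
    deriv_fun_add (hξ₀y z hz y hy) (hcy z hz y hy)
  -- derivative of the linear part
  have hLd : HasFDerivAt (fun z' : Fin g → ℂ => l z' / 2)
      ((2 : ℂ)⁻¹ • (L : (Fin g → ℂ) →L[ℂ] ℂ)) z := by
    exact (L.hasFDerivAt.const_mul (2 : ℂ)⁻¹).congr_of_eventuallyEq
      (Filter.Eventually.of_forall fun z' => by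
        simp only [hL, LinearMap.coe_toContinuousLinearMap']; ring)
  have htilde : HasFDerivAt
      (fun z' => ξs z' y + c z' y * ξ₁ z' y + l z' / 2 * deriv (fun y' => c z' y') y)
      (fderiv ℂ (fun z' => ξs z' y) z
        + (c z y • fderiv ℂ (fun z' => ξ₁ z' y) z
            + ξ₁ z y • fderiv ℂ (fun z' => c z' y) z)
        + ((l z / 2) • fderiv ℂ (fun z' => deriv (fun y' => c z' y') y) z
            + deriv (fun y' => c z y') y • ((2 : ℂ)⁻¹ • (L : (Fin g → ℂ) →L[ℂ] ℂ)))) z :=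
    (hdξs.hasFDerivAt.add (hdc.hasFDerivAt.mul hdξ₁.hasFDerivAt)).add
      (hLd.mul hdcy.hasFDerivAt)
  rw [htilde.fderiv]
  simp only [ContinuousLinearMap.add_apply, ContinuousLinearMap.smul_apply, smul_eq_mul,
    hcU z hz y hy, hcyU z hz y hy, mul_zero, add_zero, zero_add,
    LinearMap.coe_toContinuousLinearMap', hlU, hsecond, hderiv, hL]
  linear_combination hξseq z hz y hy + c z y * hξ₁eq z hz y hy
end
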